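/- Let T be a lexicographically ordered ω₁-tree such that for every v ∈ T the first level of the cone T_v that is not a singleton is, under <lex, order-isomorphic to the rationals. Let U be a downward-closed pruned subtree of T of height ω₁ which has no local end points, and let t ∈ U. Then there is a club (closed unbounded) set E ⊆ ω₁ such that for every δ ∈ E with δ > ht(t), the linearly ordered set (U_t(δ), <lex) is order-isomorphic to the rationals, i.e., it is a countable dense linear order without end points. -/

import Mathlib

noncomputable section

open Cardinal Set

def omega1 : Ordinal := (Cardinal.aleph 1).ord

def omega2 : Ordinal := (Cardinal.aleph 2).ord

/-- The height of an element `t`: the order type of its set of strict predecessors. -/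
def htOf {X : Type} (lt : X → X → Prop)
    (wo : ∀ t : X, IsWellOrder {s : X // lt s t} fun a b => lt a.1 b.1) (t : X) : Ordinal :=
  @Ordinal.type {s : X // lt s t} (fun a b => lt a.1 b.1) (wo t)

/-- A lexicographically ordered (normal) `ω₁`-tree. -/
structure LexOmega1Tree where
  T : Type
  lt : T → T → Prop
  lt_irrefl : ∀ a : T, ¬ lt a a
  lt_trans : ∀ {a b c : T}, lt a b → lt b c → lt a c
  /-- the strict predecessors of any element are well-ordered -/
  predWO : ∀ t : T, IsWellOrder {s : T // lt s t} fun a b => lt a.1 b.1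
  /-- every level is countable -/
  level_countable : ∀ α : Ordinal, {t : T | htOf lt predWO t = α}.Countable
  /-- levels are nonempty exactly below `ω₁` -/
  level_nonempty : ∀ α : Ordinal, (∃ t : T, htOf lt predWO t = α) ↔ α < omega1
  /-- normality: distinct elements of the same limit height have different predecessors -/
  normal : ∀ s t : T, htOf lt predWO s = htOf lt predWO t →
    Order.IsSuccLimit (htOf lt predWO s) → (∀ u : T, lt u s ↔ lt u t) → s = t
  /-- the lexicographic comparison of distinct elements of equal height -/
  lexlt : T → T → Prop
  lexlt_same : ∀ a b : T, lexlt a b → htOf lt predWO a = htOf lt predWO b ∧ a ≠ b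
  lexlt_tricho : ∀ a b : T, htOf lt predWO a = htOf lt predWO b → a ≠ b →
    lexlt a b ∨ lexlt b a
  lexlt_asymm : ∀ a b : T, lexlt a b → ¬ lexlt b a
  lexlt_trans : ∀ {a b c : T}, lexlt a b → lexlt b c → lexlt a c
  /-- coherence: the lexicographic comparison is decided at the splitting level -/
  lexlt_coh : ∀ a b a' b' : T, lexlt a b → lt a a' → lt b b' →
    htOf lt predWO a' = htOf lt predWO b' → lexlt a' b'

namespace LexOmega1Tree

variable (S : LexOmega1Tree)

def ht : S.T → Ordinal := htOf S.lt S.predWO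

def le (a b : S.T) : Prop := S.lt a b ∨ a = b

/-- a cofinal branch : a downward closed chain meeting every level -/
def IsBranch (b : Set S.T) : Prop :=
  (∀ s t : S.T, t ∈ b → S.lt s t → s ∈ b) ∧
  (∀ s t : S.T, s ∈ b → t ∈ b → s = t ∨ S.lt s t ∨ S.lt t s) ∧
  (∀ α : Ordinal, α < omega1 → ∃ t ∈ b, S.ht t = α)

/-- the set `𝓑(T)` of cofinal branches -/
def Branch : Type := {b : Set S.T // S.IsBranch b}

/-- the lexicographic order on branches (and on arbitrary sets of nodes) -/
def blex (A B : Set S.T) : Prop := ∃ a ∈ A, ∃ b ∈ B, S.lexlt a b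

/-- the order topology on `(𝓑(T), <lex)`, generated by the open rays -/
def branchTop : TopologicalSpace S.Branch :=
  TopologicalSpace.generateFrom
    {s : Set S.Branch | ∃ a : S.Branch, s = {x | S.blex a.1 x.1} ∨ s = {x | S.blex x.1 a.1}}

/-- `b` is a local right end point of the downward closed subtree `W` -/
def IsLocalRightEP (W b : Set S.T) : Prop :=
  ∃ t ∈ b, ∀ s ∈ b, S.ht t ≤ S.ht s →
    ∀ u ∈ W, S.ht u = S.ht s → S.le t u → u = s ∨ S.lexlt u s

/-- `b` is a local left end point of the downward closed subtree `W` -/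
def IsLocalLeftEP (W b : Set S.T) : Prop :=
  ∃ t ∈ b, ∀ s ∈ b, S.ht t ≤ S.ht s →
    ∀ u ∈ W, S.ht u = S.ht s → S.le t u → u = s ∨ S.lexlt s u

def IsLocalEP (W b : Set S.T) : Prop := S.IsLocalRightEP W b ∨ S.IsLocalLeftEP W b

end LexOmega1Tree

namespace LexOmega1Tree

variable (S : LexOmega1Tree)

/-- the level of height `α` of the cone `T_v` (the set of elements comparable with `v`) -/
def coneLevel (v : S.T) (α : Ordinal) : Set S.T :=
  {s : S.T | (S.le s v ∨ S.le v s) ∧ S.ht s = α}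

/-- `(A, <lex)` is order isomorphic to the rationals: a countable nonempty dense linear
order without end points. -/
def IsoRatOn (A : Set S.T) : Prop :=
  A.Countable ∧ A.Nonempty ∧
  (∀ a ∈ A, ∀ b ∈ A, S.lexlt a b → ∃ c ∈ A, S.lexlt a c ∧ S.lexlt c b) ∧
  (∀ a ∈ A, ∃ b ∈ A, S.lexlt a b) ∧
  (∀ a ∈ A, ∃ b ∈ A, S.lexlt b a)

/-- for every `v`, the first level of the cone `T_v` that is not a singleton is,
under `<lex`, order isomorphic to the rationals -/
def RatBranching : Prop :=
  ∀ v : S.T, ∃ α : Ordinal,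
    ¬ (S.coneLevel v α).Subsingleton ∧
    (∀ β : Ordinal, β < α → (S.coneLevel v β).Subsingleton) ∧
    S.IsoRatOn (S.coneLevel v α)

end LexOmega1Tree

/-- `E` is a club (closed unbounded) subset of the ordinal `o`. -/
def IsClubBelow (E : Set Ordinal) (o : Ordinal) : Prop :=
  E ⊆ Set.Iio o ∧
  (∀ α : Ordinal, α < o → ∃ β ∈ E, α ≤ β) ∧
  (∀ α : Ordinal, α < o → Order.IsSuccLimit α →
    (∀ β : Ordinal, β < α → ∃ γ ∈ E, β < γ ∧ γ < α) → α ∈ E)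

/-!
If no cofinal branch of `U` is a local right end point, then above every node `u` there is a
countable level beyond which no node of `U` above `u` is `<lex`-greatest in `U_u` at its height:
otherwise these rightmost nodes would form such a branch. Reversing the lexicographic order gives
the same on the left. The limit levels `δ` closed under these bounds form a club. At such a `δ` the
level `U_t(δ)` has no end points, and it is dense: by normality two of its nodes `a <lex b` split
at nodes `u <lex v` below `δ`, and a node of `U_u(δ)` to the right of `a` is still left of `b`.
-/

theorem isSuccLimit_omega1 : Order.IsSuccLimit omega1 :=
  Cardinal.isSuccLimit_ord (Cardinal.aleph0_le_aleph 1)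

theorem countable_Iic_of_lt_omega1 {β : Ordinal} (h : β < omega1) : (Iic β).Countable := by
  rw [← Order.Iio_succ, ← Set.countable_coe_iff, ← Cardinal.mk_le_aleph0_iff,
    Cardinal.mk_Iio_ordinal, Cardinal.lift_le_aleph0, ← Cardinal.lt_aleph_one_iff,
    ← Cardinal.lt_ord]
  exact isSuccLimit_omega1.succ_lt h

theorem iSup_lt_omega1 {ι : Type*} [Countable ι] {f : ι → Ordinal} (hf : ∀ i, f i < omega1) :
    ⨆ i, f i < omega1 := by
  rw [omega1, Cardinal.ord_aleph] at hf ⊢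
  exact Ordinal.iSup_lt_omega_one hf

theorem exists_ge_isSuccLimit_forall_lt (F : Ordinal → Ordinal) (hF : ∀ β < omega1, F β < omega1)
    {α : Ordinal} (hα : α < omega1) :
    ∃ δ < omega1, α ≤ δ ∧ Order.IsSuccLimit δ ∧ ∀ β < δ, F β < δ := by
  -- `f x` exceeds `x` and all `F γ` with `γ ≤ x`, so the supremum of its iterates is closed
  -- under `F`.
  let f x := Order.succ (max x (⨆ γ : Iic x, F γ))
  have hf : ∀ x < omega1, f x < omega1 := fun x hx =>
    have : Countable (Iic x) := (countable_Iic_of_lt_omega1 hx).to_subtype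
    isSuccLimit_omega1.succ_lt (max_lt hx (iSup_lt_omega1 fun γ => hF γ (γ.2.trans_lt hx)))
  have hlt_f : ∀ x, x < f x := fun x => (le_max_left _ _).trans_lt (Order.lt_succ _)
  have hF_lt_f : ∀ β x, β ≤ x → F β < f x := fun β x h =>
    ((Ordinal.le_iSup (fun γ : Iic x => F γ) ⟨β, h⟩).trans (le_max_right _ _)).trans_lt
      (Order.lt_succ _)
  have hf_le : ∀ n, f (f^[n] α) ≤ Ordinal.nfp f α := fun n =>
    Function.iterate_succ_apply' f n α ▸ Ordinal.iterate_le_nfp f α (n + 1)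
  refine ⟨Ordinal.nfp f α, ?_, Ordinal.le_nfp f α,
    ⟨not_isMin_of_lt ((hlt_f α).trans_le (hf_le 0)),
      Order.isSuccPrelimit_of_succ_lt fun x hx => ?_⟩, fun β hβ => ?_⟩
  · exact Cardinal.nfp_lt_ord_of_isRegular Cardinal.isRegular_aleph_one
      Cardinal.aleph0_lt_aleph_one.ne' hf hα
  · obtain ⟨n, hn⟩ := Ordinal.lt_nfp_iff.1 hx
    exact (Order.succ_le_of_lt hn).trans_lt ((hlt_f _).trans_le (hf_le n))
  · obtain ⟨n, hn⟩ := Ordinal.lt_nfp_iff.1 hβ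
    exact (hF_lt_f β _ hn.le).trans_le (hf_le n)

theorem isClubBelow_setOf_forall_lt (F : Ordinal → Ordinal) (hF : ∀ β < omega1, F β < omega1) :
    IsClubBelow {δ | δ < omega1 ∧ Order.IsSuccLimit δ ∧ ∀ β < δ, F β < δ} omega1 := by
  refine ⟨fun δ hδ => hδ.1, fun α hα => ?_, fun α hα hlim hcl => ⟨hα, hlim, fun β hβ => ?_⟩⟩
  · obtain ⟨δ, hδ, hαδ, hlim, hF⟩ := exists_ge_isSuccLimit_forall_lt F hF hα
    exact ⟨δ, ⟨hδ, hlim, hF⟩, hαδ⟩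
  · obtain ⟨γ, ⟨-, -, hγ⟩, hβγ, hγα⟩ := hcl β hβ
    exact (hγ β hβγ).trans hγα

namespace LexOmega1Tree

variable {S : LexOmega1Tree} {U : Set S.T} {a b s t u w w' : S.T} {δ : Ordinal}

theorem le.refl (a : S.T) : S.le a a := Or.inr rfl

theorem lt.le (h : S.lt a b) : S.le a b := Or.inl h

theorem le.trans (h : S.le a b) (h' : S.le b t) : S.le a t := by
  rcases h with h | rfl
  · rcases h' with h' | rfl
    exacts [Or.inl (S.lt_trans h h'), Or.inl h]
  · exact h'

theorem ht_eq_typein (s : {x : S.T // S.lt x t}) :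
    S.ht s.1 = @Ordinal.typein _ (fun a b => S.lt a.1 b.1) (S.predWO t) s := by
  have := S.predWO t
  have := S.predWO s.1
  rw [← Ordinal.type_subrel]
  exact Ordinal.type_eq.mpr ⟨⟨⟨fun x => ⟨⟨x.1, S.lt_trans x.2 s.2⟩, x.2⟩,
    fun y => ⟨y.1.1, y.2⟩, fun _ => rfl, fun _ => rfl⟩, Iff.rfl⟩⟩

theorem lt.ht_lt (h : S.lt s t) : S.ht s < S.ht t := by
  have := S.predWO t
  rw [ht_eq_typein ⟨s, h⟩]
  exact Ordinal.typein_lt_type _ _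

theorem le.ht_le (h : S.le s t) : S.ht s ≤ S.ht t := by
  rcases h with h | rfl
  exacts [h.ht_lt.le, le_rfl]

theorem le.lt_of_ht_lt (h : S.le s t) (hh : S.ht s < S.ht t) : S.lt s t := by
  rcases h with h | rfl
  exacts [h, (hh.ne rfl).elim]

theorem ht_lt_omega1 (t : S.T) : S.ht t < omega1 := (S.level_nonempty (S.ht t)).mp ⟨t, rfl⟩

theorem exists_le_ht_eq (t : S.T) {α : Ordinal} (h : α ≤ S.ht t) :
    ∃ s, S.le s t ∧ S.ht s = α := by
  rcases h.eq_or_lt with rfl | h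
  · exact ⟨t, le.refl t, rfl⟩
  have := S.predWO t
  let s := Ordinal.enum (fun a b : {x : S.T // S.lt x t} => S.lt a.1 b.1) ⟨α, h⟩
  exact ⟨s.1, s.2.le, (ht_eq_typein s).trans (Ordinal.typein_enum _ _)⟩

theorem le_of_ht_le (hs : S.le s a) (hw : S.le w a) (h : S.ht s ≤ S.ht w) : S.le s w := by
  rcases hw with hw | rfl
  · rcases hs with hs | rfl
    · have := S.predWO a
      rcases trichotomous_of (fun x y : {x : S.T // S.lt x a} => S.lt x.1 y.1) ⟨s, hs⟩ ⟨w, hw⟩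
        with h' | h' | h'
      · exact h'.le
      · exact Or.inr (congrArg Subtype.val h')
      · exact absurd (lt.ht_lt (t := s) h') h.not_gt
    · exact absurd hw.ht_lt h.not_gt
  · exact hs

theorem eq_of_ht_eq (hs : S.le s a) (hw : S.le w a) (h : S.ht s = S.ht w) : s = w := by
  rcases le_of_ht_le hs hw h.le with h' | h'
  exacts [(h'.ht_lt.ne h).elim, h']

theorem comparable_of_le_of_le (hs : S.le s a) (hw : S.le w a) : S.le s w ∨ S.le w s :=
  (le_total (S.ht s) (S.ht w)).imp (le_of_ht_le hs hw) (le_of_ht_le hw hs)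

variable (S) in
def IsDownClosed (U : Set S.T) : Prop := ∀ s t : S.T, t ∈ U → S.lt s t → s ∈ U

variable (S) in
def IsPruned (U : Set S.T) : Prop :=
  ∀ u ∈ U, ∀ α : Ordinal, S.ht u ≤ α → α < omega1 → ∃ s ∈ U, S.le u s ∧ S.ht s = α

theorem IsDownClosed.mem_of_le (hU : S.IsDownClosed U) (ht : t ∈ U) (h : S.le s t) : s ∈ U := by
  rcases h with h | rfl
  exacts [hU s t ht h, ht]

theorem lexlt_of_lt_of_lt (hab : S.lexlt a b) (hu : S.lt u a) (hw : S.lt w b)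
    (hh : S.ht u = S.ht w) (hne : u ≠ w) : S.lexlt u w := by
  refine (S.lexlt_tricho u w hh hne).resolve_right fun hwu => S.lexlt_asymm a b hab ?_
  exact S.lexlt_coh w u b a hwu hw hu ((S.lexlt_same a b hab).1.symm)

theorem lt_of_forall_eq_of_lt (h : ∀ u w, S.lt u a → S.lt w b → S.ht u = S.ht w → u = w)
    (hab : S.ht a = S.ht b) (hu : S.lt u a) : S.lt u b := by
  obtain ⟨w, hwb, hw⟩ := exists_le_ht_eq b (hab ▸ hu.ht_lt).le
  have hwb' := hwb.lt_of_ht_lt (hw ▸ hab ▸ hu.ht_lt)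
  rwa [h u w hu hwb' hw.symm]

theorem exists_lt_lt_ne_of_isSuccLimit (hab : S.ht a = S.ht b) (hlim : Order.IsSuccLimit (S.ht a))
    (hne : a ≠ b) : ∃ u w, S.lt u a ∧ S.lt w b ∧ S.ht u = S.ht w ∧ u ≠ w := by
  by_contra! h
  refine hne (S.normal a b hab hlim fun u => ⟨lt_of_forall_eq_of_lt h hab, ?_⟩)
  exact lt_of_forall_eq_of_lt (fun u w hu hw hh => (h w u hw hu hh.symm).symm) hab.symm

variable (S) in
def IsRightmostAbove (U : Set S.T) (u w : S.T) : Prop :=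
  w ∈ U ∧ S.le u w ∧ ∀ c ∈ U, S.le u c → S.ht c = S.ht w → ¬ S.lexlt w c

theorem IsRightmostAbove.of_le (hU : S.IsDownClosed U) (hp : S.IsPruned U)
    (hw : S.IsRightmostAbove U u w) (hus : S.le u s) (hsw : S.le s w) :
    S.IsRightmostAbove U u s := by
  refine ⟨hU.mem_of_le hw.1 hsw, hus, fun c hc huc hcs hsc => ?_⟩
  rcases hsw.ht_le.eq_or_lt with hh | hh
  · exact hw.2.2 c hc huc (hcs.trans hh) (eq_of_ht_eq hsw (le.refl w) hh ▸ hsc)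
  obtain ⟨c', hc', hcc', hc'h⟩ := hp c hc (S.ht w) (hcs ▸ hh.le) (ht_lt_omega1 w)
  refine hw.2.2 c' hc' (huc.trans hcc') hc'h
    (S.lexlt_coh s c w c' hsc (hsw.lt_of_ht_lt hh) ?_ hc'h.symm)
  exact hcc'.lt_of_ht_lt (hcs ▸ hc'h ▸ hh)

theorem IsRightmostAbove.le_of_ht_le (hU : S.IsDownClosed U) (hp : S.IsPruned U)
    (hw : S.IsRightmostAbove U u w) (hw' : S.IsRightmostAbove U u w') (hh : S.ht w ≤ S.ht w') :
    S.le w w' := by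
  obtain ⟨r, hrw', hr⟩ := exists_le_ht_eq w' hh
  have hur : S.le u r := LexOmega1Tree.le_of_ht_le hw'.2.1 hrw' (hr ▸ hw.2.1.ht_le)
  obtain rfl | hne := eq_or_ne r w
  · exact hrw'
  rcases S.lexlt_tricho r w hr hne with hrw | hwr
  · rcases hh.eq_or_lt with hh | hh
    · exact (hw'.2.2 w hw.1 hw.2.1 hh (eq_of_ht_eq hrw' (le.refl w') (hr.trans hh) ▸ hrw)).elim
    obtain ⟨c, hc, hwc, hch⟩ := hp w hw.1 (S.ht w') hh.le (ht_lt_omega1 w')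
    refine (hw'.2.2 c hc (hw.2.1.trans hwc) hch ?_).elim
    exact S.lexlt_coh r w w' c hrw (hrw'.lt_of_ht_lt (hr ▸ hh))
      (hwc.lt_of_ht_lt (hch ▸ hh)) hch.symm
  · exact (hw.2.2 r (hU.mem_of_le hw'.1 hrw') hur hr hwr).elim

theorem isBranch_setOf_le_isRightmostAbove (hU : S.IsDownClosed U) (hp : S.IsPruned U)
    (hcof : ∀ α < omega1, ∃ w, α ≤ S.ht w ∧ S.IsRightmostAbove U u w) :
    S.IsBranch {s | ∃ w, S.IsRightmostAbove U u w ∧ S.le s w} := by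
  refine ⟨fun s t ⟨w, hw, htw⟩ hst => ⟨w, hw, hst.le.trans htw⟩, ?_, fun α hα => ?_⟩
  · rintro s s' ⟨w, hw, hsw⟩ ⟨w', hw', hsw'⟩
    have hcomp : S.le s s' ∨ S.le s' s := by
      rcases le_total (S.ht w) (S.ht w') with hh | hh
      · exact comparable_of_le_of_le (hsw.trans (hw.le_of_ht_le hU hp hw' hh)) hsw'
      · exact comparable_of_le_of_le hsw (hsw'.trans (hw'.le_of_ht_le hU hp hw hh))
    rcases hcomp with (h | rfl) | (h | rfl)
    exacts [Or.inr (Or.inl h), Or.inl rfl, Or.inr (Or.inr h), Or.inl rfl]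
  · obtain ⟨w, hαw, hw⟩ := hcof α hα
    obtain ⟨s, hsw, hs⟩ := exists_le_ht_eq w hαw
    exact ⟨s, ⟨w, hw, hsw⟩, hs⟩

theorem isLocalRightEP_setOf_le_isRightmostAbove (hU : S.IsDownClosed U) (hp : S.IsPruned U)
    (hw : S.IsRightmostAbove U u w) :
    S.IsLocalRightEP U {s | ∃ w, S.IsRightmostAbove U u w ∧ S.le s w} := by
  refine ⟨u, ⟨w, hw, hw.2.1⟩, fun s ⟨w₀, hw₀, hsw₀⟩ hus c hc hcs huc => ?_⟩
  have hs := hw₀.of_le hU hp (LexOmega1Tree.le_of_ht_le hw₀.2.1 hsw₀ hus) hsw₀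
  exact (eq_or_ne c s).imp_right fun hne =>
    (S.lexlt_tricho c s hcs hne).resolve_right (hs.2.2 c hc huc hcs)

theorem exists_forall_not_isRightmostAbove (hU : S.IsDownClosed U) (hp : S.IsPruned U)
    (hnoR : ∀ b, S.IsBranch b → b ⊆ U → ¬ S.IsLocalRightEP U b) (u : S.T) :
    ∃ lam < omega1, ∀ w, lam ≤ S.ht w → ¬ S.IsRightmostAbove U u w := by
  by_contra! hcof
  obtain ⟨w, -, hw⟩ := hcof 0 (zero_le.trans_lt (ht_lt_omega1 u))
  exact hnoR _ (isBranch_setOf_le_isRightmostAbove hU hp hcof)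
    (fun s ⟨w, hw, hsw⟩ => hU.mem_of_le hw.1 hsw)
    (isLocalRightEP_setOf_le_isRightmostAbove hU hp hw)

def lexDual (S : LexOmega1Tree) : LexOmega1Tree where
  __ := S
  lexlt a b := S.lexlt b a
  lexlt_same a b h := ⟨(S.lexlt_same b a h).1.symm, (S.lexlt_same b a h).2.symm⟩
  lexlt_tricho a b h h' := (S.lexlt_tricho a b h h').symm
  lexlt_asymm a b := S.lexlt_asymm b a
  lexlt_trans h h' := S.lexlt_trans h' h
  lexlt_coh a b a' b' h ha hb hh := S.lexlt_coh b a b' a' h hb ha hh.symm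

theorem exists_lexlt_of_not_isRightmostAbove (hw : w ∈ U) (huw : S.le u w)
    (h : ¬ S.IsRightmostAbove U u w) : ∃ c ∈ U, S.le u c ∧ S.ht c = S.ht w ∧ S.lexlt w c := by
  by_contra! h'
  exact h ⟨hw, huw, h'⟩

theorem isoRatOn_of_forall_not_isRightmostAbove (hp : S.IsPruned U) (ht : t ∈ U)
    (hδω : δ < omega1) (hδ : Order.IsSuccLimit δ) (htδ : S.ht t < δ)
    (hR : ∀ u w, S.ht u < δ → S.ht w = δ → ¬ S.IsRightmostAbove U u w)
    (hL : ∀ u w, S.ht u < δ → S.ht w = δ → ¬ S.lexDual.IsRightmostAbove U u w) :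
    S.IsoRatOn {s | s ∈ U ∧ S.ht s = δ ∧ (S.le s t ∨ S.le t s)} := by
  have hA : {s | s ∈ U ∧ S.ht s = δ ∧ (S.le s t ∨ S.le t s)} =
      {s | s ∈ U ∧ S.ht s = δ ∧ S.le t s} := by
    ext s
    exact and_congr_right fun _ => and_congr_right fun hs =>
      or_iff_right fun hst => (hst.ht_le.trans_lt htδ).ne hs
  rw [hA]
  refine ⟨(S.level_countable δ).mono fun s hs => hs.2.1, ?_, ?_, fun a ⟨ha, haδ, hta⟩ => ?_,
    fun a ⟨ha, haδ, hta⟩ => ?_⟩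
  · obtain ⟨s, hs, hts, hsδ⟩ := hp t ht δ htδ.le hδω
    exact ⟨s, hs, hsδ, hts⟩
  · rintro a ⟨ha, haδ, hta⟩ b ⟨hb, hbδ, htb⟩ hab
    obtain ⟨u, v, hua, hvb, huv, hne⟩ := exists_lt_lt_ne_of_isSuccLimit (haδ.trans hbδ.symm)
      (haδ ▸ hδ) (S.lexlt_same a b hab).2
    have huδ : S.ht u < δ := haδ ▸ hua.ht_lt
    have htu : S.le t u := by
      refine le_of_ht_le hta hua.le (not_lt.1 fun hut => hne ?_)
      exact eq_of_ht_eq (le_of_ht_le hua.le hta hut.le)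
        (le_of_ht_le hvb.le htb (huv ▸ hut.le)) huv
    obtain ⟨c, hc, huc, hch, hac⟩ := exists_lexlt_of_not_isRightmostAbove ha hua.le
      (hR u a huδ haδ)
    refine ⟨c, ⟨hc, hch.trans haδ, htu.trans huc⟩, hac, ?_⟩
    exact S.lexlt_coh u v c b (lexlt_of_lt_of_lt hab hua hvb huv hne)
      (huc.lt_of_ht_lt (hch ▸ haδ ▸ huδ)) hvb (hch.trans (haδ.trans hbδ.symm))
  · obtain ⟨c, hc, htc, hch, hac⟩ := exists_lexlt_of_not_isRightmostAbove ha hta (hR t a htδ haδ)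
    exact ⟨c, ⟨hc, hch.trans haδ, htc⟩, hac⟩
  · obtain ⟨c, hc, htc, hch, hca⟩ :=
      exists_lexlt_of_not_isRightmostAbove (S := S.lexDual) ha hta (hL t a htδ haδ)
    exact ⟨c, ⟨hc, hch.trans haδ, htc⟩, hca⟩

end LexOmega1Tree

theorem stmt6_general (S : LexOmega1Tree)
    (U : Set S.T)
    (hdc : ∀ s t : S.T, t ∈ U → S.lt s t → s ∈ U)
    (hpruned : ∀ u ∈ U, ∀ α : Ordinal, S.ht u ≤ α → α < omega1 →
      ∃ s ∈ U, S.le u s ∧ S.ht s = α)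
    (hnoEP : ∀ b : Set S.T, S.IsBranch b → b ⊆ U → ¬ S.IsLocalEP U b)
    (t : S.T) (htU : t ∈ U) :
    ∃ E : Set Ordinal, IsClubBelow E omega1 ∧
      ∀ δ ∈ E, S.ht t < δ →
        S.IsoRatOn {s : S.T | s ∈ U ∧ S.ht s = δ ∧ (S.le s t ∨ S.le t s)} := by
  choose lamR hlamR hR using LexOmega1Tree.exists_forall_not_isRightmostAbove (S := S) hdc hpruned
    fun b hb hbU h => hnoEP b hb hbU (Or.inl h)
  choose lamL hlamL hL using
    LexOmega1Tree.exists_forall_not_isRightmostAbove (S := S.lexDual) hdc hpruned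
    fun b hb hbU h => hnoEP b hb hbU (Or.inr h)
  let F β := ⨆ u : {u : S.T // S.ht u = β}, max (lamR u.1) (lamL u.1)
  have hF : ∀ β < omega1, F β < omega1 := fun β _ =>
    have : Countable {u : S.T // S.ht u = β} := (S.level_countable β).to_subtype
    iSup_lt_omega1 fun u => max_lt (hlamR u.1) (hlamL u.1)
  have hlam_le : ∀ u, max (lamR u) (lamL u) ≤ F (S.ht u) := fun u =>
    Ordinal.le_iSup (fun v : {v : S.T // S.ht v = S.ht u} => max (lamR v.1) (lamL v.1)) ⟨u, rfl⟩
  refine ⟨_, isClubBelow_setOf_forall_lt F hF, fun δ ⟨hδω, hδ, hδF⟩ htδ => ?_⟩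
  have hlam_lt : ∀ u, S.ht u < δ → max (lamR u) (lamL u) < δ := fun u hu =>
    (hlam_le u).trans_lt (hδF _ hu)
  refine LexOmega1Tree.isoRatOn_of_forall_not_isRightmostAbove hpruned htU hδω hδ htδ
    (fun u w hu hw => hR u w ?_) (fun u w hu hw => hL u w ?_)
  · exact hw ▸ (le_max_left _ _).trans (hlam_lt u hu).le
  · exact hw ▸ (le_max_right _ _).trans (hlam_lt u hu).le

/-- Let `T` be a lexicographically ordered `ω₁`-tree such that for every `v`
the first non-singleton level of the cone `T_v` is order isomorphic to `ℚ` under `<lex`.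
If `U` is a downward-closed pruned subtree of height `ω₁` without local end points and
`t ∈ U`, then there is a club `E ⊆ ω₁` such that for every `δ ∈ E` above `ht t`, the
level `U_t(δ)` is order isomorphic to the rationals under `<lex`. -/
theorem stmt6 (S : LexOmega1Tree) (hrat : S.RatBranching)
    (U : Set S.T)
    (hdc : ∀ s t : S.T, t ∈ U → S.lt s t → s ∈ U)
    (hpruned : ∀ u ∈ U, ∀ α : Ordinal, S.ht u ≤ α → α < omega1 →
      ∃ s ∈ U, S.le u s ∧ S.ht s = α)
    (hht : ∀ α : Ordinal, α < omega1 → ∃ u ∈ U, S.ht u = α)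
    (hnoEP : ∀ b : Set S.T, S.IsBranch b → b ⊆ U → ¬ S.IsLocalEP U b)
    (t : S.T) (htU : t ∈ U) :
    ∃ E : Set Ordinal, IsClubBelow E omega1 ∧
      ∀ δ ∈ E, S.ht t < δ →
        S.IsoRatOn {s : S.T | s ∈ U ∧ S.ht s = δ ∧ (S.le s t ∨ S.le t s)} :=
  stmt6_general S U hdc hpruned hnoEP t htU
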